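/- arXiv:2307.09439 — 3 statements merged into one kernel-verified Lean document; each statement's English description precedes it below -/
import Mathlib

section
/- Suppose χ = (P₁,P₂,P₃,P₄) is a vector field on S¹×S² where P₁, P₂ are nonzero homogeneous polynomials of degree m and P₃, P₄ are nonzero homogeneous polynomials of degree n. If m − 1 ≤ n ≤ m + 3, then G_a = (x₁²+x₂²−a²)² + x₃² + x₄² − 1 is a first integral of χ, i.e., χG_a = 0 in ℝ[x₁,x₂,x₃,x₄]. -/
open MvPolynomial


private lemma hc_mul {p q : MvPolynomial (Fin 4) ℝ} {j : ℕ} (hq : q.IsHomogeneous j) (i : ℕ) :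
    homogeneousComponent (i + j) (p * q) = homogeneousComponent i p * q := by
  conv_lhs => rw [← sum_homogeneousComponent p]
  rw [Finset.sum_mul, map_sum]
  have h1 : ∀ i' ∈ Finset.range (p.totalDegree + 1),
      homogeneousComponent (i + j) (homogeneousComponent i' p * q)
        = if i = i' then homogeneousComponent i' p * q else 0 := by
    intro i' _
    rw [homogeneousComponent_of_mem ((mem_homogeneousSubmodule _ _).2
      ((homogeneousComponent_isHomogeneous i' p).mul hq))]
    simp
  rw [Finset.sum_congr rfl h1, Finset.sum_ite_eq]
  split
  · rfl
  · next h =>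
    rw [Finset.mem_range, not_lt] at h
    rw [eq_comm, homogeneousComponent_eq_zero i p (by omega), zero_mul]

private lemma hc_mul_zero {p q : MvPolynomial (Fin 4) ℝ} {j : ℕ} (hq : q.IsHomogeneous j)
    {k : ℕ} (hk : k < j) : homogeneousComponent k (p * q) = 0 := by
  conv_lhs => rw [← sum_homogeneousComponent p]
  rw [Finset.sum_mul, map_sum]
  refine Finset.sum_eq_zero fun i' _ => ?_
  rw [homogeneousComponent_of_mem ((mem_homogeneousSubmodule _ _).2
    ((homogeneousComponent_isHomogeneous i' p).mul hq)), if_neg (by omega)]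

private lemma hc_top_ne {K : MvPolynomial (Fin 4) ℝ} (hK : K ≠ 0) :
    homogeneousComponent K.totalDegree K ≠ 0 := by
  obtain ⟨d, hd, hdeg⟩ := Finset.exists_mem_eq_sup K.support
    (support_nonempty.2 hK) (fun s => s.sum fun _ e => e)
  intro h0
  have hdd : d.degree = K.totalDegree := by
    rw [totalDegree, hdeg]; rfl
  have hc := coeff_homogeneousComponent K.totalDegree K d
  rw [h0, if_pos hdd] at hc
  exact (mem_support_iff.1 hd) hc.symm


/-- The action of the polynomial vector field `χ = (P 0, P 1, P 2, P 3)` on a polynomial: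
`χf = Σᵢ Pᵢ ∂f/∂xᵢ`. -/
noncomputable def chi (P : Fin 4 → MvPolynomial (Fin 4) ℝ)
    (f : MvPolynomial (Fin 4) ℝ) : MvPolynomial (Fin 4) ℝ :=
  ∑ i, P i * pderiv i f

/-- `G_a = (x₁² + x₂² - a²)² + x₃² + x₄² - 1`, whose zero set is `S¹ × S²`. -/
noncomputable def Ga (a : ℝ) : MvPolynomial (Fin 4) ℝ :=
  (X 0 ^ 2 + X 1 ^ 2 - C (a ^ 2)) ^ 2 + X 2 ^ 2 + X 3 ^ 2 - 1

private lemma chi_eq (a : ℝ) (P : Fin 4 → MvPolynomial (Fin 4) ℝ) :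
    chi P (Ga a) =
      (P 0 * (C 4 * X 0 * (X 0 ^ 2 + X 1 ^ 2)) + P 1 * (C 4 * X 1 * (X 0 ^ 2 + X 1 ^ 2)))
      + (P 0 * (C (-(4 * a ^ 2)) * X 0) + P 1 * (C (-(4 * a ^ 2)) * X 1))
      + (P 2 * (C 2 * X 2) + P 3 * (C 2 * X 3)) := by
  simp only [chi, Ga, Fin.sum_univ_four, map_add, map_sub, pderiv_pow, pderiv_X_self,
    pderiv_C, pderiv_one, map_one]
  simp only [pderiv_X, Pi.single_apply, map_neg, map_mul, map_pow, map_ofNat]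
  simp only [Fin.reduceEq, reduceIte]
  norm_num
  ring

theorem stmt_7 (a : ℝ) (ha : 1 < a) (m n : ℕ) (P : Fin 4 → MvPolynomial (Fin 4) ℝ)
    (hne : ∀ i, P i ≠ 0)
    (h01 : (P 0).IsHomogeneous m ∧ (P 1).IsHomogeneous m)
    (h23 : (P 2).IsHomogeneous n ∧ (P 3).IsHomogeneous n)
    (hmn₁ : m - 1 ≤ n) (hmn₂ : n ≤ m + 3)
    (hvf : ∃ K : MvPolynomial (Fin 4) ℝ, chi P (Ga a) = K * Ga a) :
    chi P (Ga a) = 0 := by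
  obtain ⟨K, hK⟩ := hvf
  by_cases hK0 : K = 0
  · rw [hK, hK0, zero_mul]
  -- degree-2 building block
  have hS : ((X 0 ^ 2 + X 1 ^ 2 : MvPolynomial (Fin 4) ℝ)).IsHomogeneous 2 := by
    simpa using ((isHomogeneous_X ℝ (0 : Fin 4)).pow 2).add ((isHomogeneous_X ℝ (1 : Fin 4)).pow 2)
  -- the three homogeneous pieces of chi P (Ga a)
  set A : MvPolynomial (Fin 4) ℝ :=
    P 0 * (C 4 * X 0 * (X 0 ^ 2 + X 1 ^ 2)) + P 1 * (C 4 * X 1 * (X 0 ^ 2 + X 1 ^ 2)) with hA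
  set B : MvPolynomial (Fin 4) ℝ :=
    P 0 * (C (-(4 * a ^ 2)) * X 0) + P 1 * (C (-(4 * a ^ 2)) * X 1) with hB
  set Cq : MvPolynomial (Fin 4) ℝ := P 2 * (C 2 * X 2) + P 3 * (C 2 * X 3) with hCq
  have hdecomp : chi P (Ga a) = A + B + Cq := chi_eq a P
  have hAh : A.IsHomogeneous (m + 3) := by
    have h3 : ((C 4 * X 0 * (X 0 ^ 2 + X 1 ^ 2)) : MvPolynomial (Fin 4) ℝ).IsHomogeneous 3 ∧
        ((C 4 * X 1 * (X 0 ^ 2 + X 1 ^ 2)) : MvPolynomial (Fin 4) ℝ).IsHomogeneous 3 := by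
      constructor <;>
      · refine ?_
        simpa using ((isHomogeneous_C (Fin 4) (4:ℝ)).mul (isHomogeneous_X ℝ _)).mul hS
    exact (h01.1.mul h3.1).add (h01.2.mul h3.2)
  have hBh : B.IsHomogeneous (m + 1) := by
    have h1 : ∀ i : Fin 4, ((C (-(4 * a ^ 2)) * X i) : MvPolynomial (Fin 4) ℝ).IsHomogeneous 1 :=
      fun i => (show (0:ℕ)+1 = 1 by norm_num) ▸
        ((isHomogeneous_C (Fin 4) (-(4*a^2))).mul (isHomogeneous_X ℝ i))
    exact (h01.1.mul (h1 0)).add (h01.2.mul (h1 1))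
  have hCh : Cq.IsHomogeneous (n + 1) := by
    have h1 : ∀ i : Fin 4, ((C 2 * X i) : MvPolynomial (Fin 4) ℝ).IsHomogeneous 1 :=
      fun i => by simpa using (isHomogeneous_C (Fin 4) (2:ℝ)).mul (isHomogeneous_X ℝ i)
    exact (h23.1.mul (h1 2)).add (h23.2.mul (h1 3))
  have key : ∀ k, homogeneousComponent k (chi P (Ga a)) ≠ 0 →
      k = m + 3 ∨ k = m + 1 ∨ k = n + 1 := by
    intro k hk
    by_contra hcon
    push_neg at hcon
    apply hk
    rw [hdecomp, map_add, map_add,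
      homogeneousComponent_of_mem ((mem_homogeneousSubmodule _ _).2 hAh),
      homogeneousComponent_of_mem ((mem_homogeneousSubmodule _ _).2 hBh),
      homogeneousComponent_of_mem ((mem_homogeneousSubmodule _ _).2 hCh),
      if_neg hcon.1, if_neg hcon.2.1, if_neg hcon.2.2, add_zero, add_zero]
  -- decomposition of Ga
  set G4 : MvPolynomial (Fin 4) ℝ := (X 0 ^ 2 + X 1 ^ 2) ^ 2 with hG4
  set G2 : MvPolynomial (Fin 4) ℝ :=
    C (-(2 * a ^ 2)) * (X 0 ^ 2 + X 1 ^ 2) + X 2 ^ 2 + X 3 ^ 2 with hG2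
  set G0 : MvPolynomial (Fin 4) ℝ := C (a ^ 2 * a ^ 2 - 1) with hG0
  have hGa : Ga a = G4 + G2 + G0 := by
    rw [hG4, hG2, hG0, Ga]
    simp only [map_neg, map_mul, map_pow, map_ofNat, map_sub, map_one]
    ring
  have hG4h : G4.IsHomogeneous 4 := by simpa using hS.pow 2
  have hG2h : G2.IsHomogeneous 2 := by
    refine (((isHomogeneous_C (Fin 4) (-(2*a^2))).mul hS).add ?_).add ?_ <;>
      simpa using (isHomogeneous_X ℝ _).pow 2
  have hG0h : G0.IsHomogeneous 0 := isHomogeneous_C _ _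
  have hG4ne : G4 ≠ 0 := by
    intro h
    have := congrArg (eval (fun _ => (1:ℝ))) h
    simp [hG4] at this
  have hG0ne : G0 ≠ 0 := by
    rw [hG0]
    intro h
    rw [MvPolynomial.C_eq_zero] at h
    have h1 : 1 < a ^ 2 := by nlinarith
    nlinarith
  -- top component
  set D := K.totalDegree with hD
  have hDne : homogeneousComponent D K ≠ 0 := hc_top_ne hK0
  have htop : homogeneousComponent (D + 4) (chi P (Ga a)) = homogeneousComponent D K * G4 := by
    have t4 : homogeneousComponent (D + 4) (K * G4) = homogeneousComponent D K * G4 :=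
      hc_mul hG4h D
    have t2 : homogeneousComponent (D + 4) (K * G2) = 0 := by
      have h := hc_mul (p := K) hG2h (D + 2)
      rw [show D + 2 + 2 = D + 4 by ring] at h
      rw [h, homogeneousComponent_eq_zero (D + 2) K (by omega), zero_mul]
    have t0 : homogeneousComponent (D + 4) (K * G0) = 0 := by
      have h := hc_mul (p := K) hG0h (D + 4)
      rw [add_zero] at h
      rw [h, homogeneousComponent_eq_zero (D + 4) K (by omega), zero_mul]
    rw [hK, hGa, mul_add, mul_add, map_add, map_add, t4, t2, t0, add_zero, add_zero]
  have htopne : homogeneousComponent (D + 4) (chi P (Ga a)) ≠ 0 := by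
    rw [htop]; exact mul_ne_zero hDne hG4ne
  -- bottom component
  have hEex : ∃ k, homogeneousComponent k K ≠ 0 := by
    by_contra h
    push_neg at h
    apply hK0
    conv_lhs => rw [← sum_homogeneousComponent K]
    exact Finset.sum_eq_zero fun i _ => h i
  set E := Nat.find hEex with hEdef
  have hEne : homogeneousComponent E K ≠ 0 := Nat.find_spec hEex
  have hEmin : ∀ k, k < E → homogeneousComponent k K = 0 := by
    intro k hk
    have := Nat.find_min hEex hk
    simpa using this
  have hED : E ≤ D := by
    by_contra h
    exact hEne (homogeneousComponent_eq_zero E K (by omega))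
  have hbot : homogeneousComponent E (chi P (Ga a)) = homogeneousComponent E K * G0 := by
    have t4 : homogeneousComponent E (K * G4) = 0 := by
      by_cases h4 : E < 4
      · exact hc_mul_zero hG4h h4
      · have h := hc_mul (p := K) hG4h (E - 4)
        rw [show E - 4 + 4 = E by omega] at h
        rw [h, hEmin _ (by omega), zero_mul]
    have t2 : homogeneousComponent E (K * G2) = 0 := by
      by_cases h2 : E < 2
      · exact hc_mul_zero hG2h h2
      · have h := hc_mul (p := K) hG2h (E - 2)
        rw [show E - 2 + 2 = E by omega] at h
        rw [h, hEmin _ (by omega), zero_mul]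
    have t0 : homogeneousComponent E (K * G0) = homogeneousComponent E K * G0 := by
      have h := hc_mul (p := K) hG0h E
      rwa [add_zero] at h
    rw [hK, hGa, mul_add, mul_add, map_add, map_add, t4, t2, t0, zero_add, zero_add]
  have hbotne : homogeneousComponent E (chi P (Ga a)) ≠ 0 := by
    rw [hbot]; exact mul_ne_zero hEne hG0ne
  have k1 := key _ htopne
  have k2 := key _ hbotne
  omega
end

section
/- A Type-n vector field on S¹×S² has at least two independent first integrals: if χ = (P₁,P₂,P₃,P₄) is a vector field on S¹×S² whose components are all homogeneous polynomials of degree n, then χ(x₁²+x₂²) = 0 and χ(x₃²+x₄²) = 0, and the two polynomials x₁²+x₂² and x₃²+x₄² are algebraically independent over ℝ. -/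
/-!
Write `H = x₁² + x₂²` and `R = x₃² + x₄²`, so that `G_a = (H - a²)² + R - 1` and
`χG_a = 2 (H - a²) χH + χR`, where `χH` and `χR` are homogeneous of degree `n + 1`. Hence the
homogeneous components of `χG_a` sit in degrees `n + 1` and `n + 3` only, whereas those of `G_a`
sit in degrees `0, 2, 4` with nonzero extreme components `a⁴ - 1` and `H²`. If `K ≠ 0`, the
components of `K G_a` would range over an interval of degrees of length at least `4`; so
`K = 0`, and the components of `χG_a = 0` in degrees `n + 3` and `n + 1` give `H χH = 0` and
`χR = 2a² χH`. The grading is tracked by the substitution `xᵢ ↦ t xᵢ` into `ℝ[x][t]`.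

Setting `x₂ = x₄ = 0` sends `H, R` to `x₁², x₃²`, which are algebraically independent since
`expand 2` is injective.
-/

open MvPolynomial

namespace Polynomial

variable {R : Type*} [Semiring R]

theorem eq_zero_of_mul_eq_X_pow_mul [NoZeroDivisors R] {q g s : R[X]} {m d : ℕ}
    (h : q * g = X ^ m * s) (hg₀ : g.coeff 0 ≠ 0) (hgd : g.coeff d ≠ 0)
    (hs : s.natDegree < d) : q = 0 := by
  nontriviality R
  by_contra hq
  have hg : g ≠ 0 := fun h ↦ hg₀ (by simp [h])
  have hs₀ : s ≠ 0 := by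
    rintro rfl
    simp [hq, hg] at h
  have hdeg := congrArg natDegree h
  have htr := congrArg natTrailingDegree h
  rw [natDegree_mul hq hg, X_pow_mul, natDegree_mul_X_pow _ hs₀] at hdeg
  rw [natTrailingDegree_mul hq hg, natTrailingDegree_eq_zero.mpr (Or.inr hg₀), X_pow_mul,
    natTrailingDegree_mul_X_pow hs₀] at htr
  have := le_natDegree_of_ne_zero hgd
  have := natTrailingDegree_le_natDegree q
  omega

theorem eq_zero_and_eq_zero_of_C_mul_X_pow_add_C {u v : R} {k : ℕ} (hk : k ≠ 0)
    (h : C u * X ^ k + C v = 0) : u = 0 ∧ v = 0 := by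
  have hu := congrArg (coeff · k) h
  have hv := congrArg (coeff · 0) h
  simp only [coeff_add, coeff_C_mul_X_pow, coeff_C, coeff_zero, if_neg hk, if_neg hk.symm,
    add_zero, zero_add] at hu hv
  exact ⟨hu, hv⟩

end Polynomial

namespace MvPolynomial

variable {σ R : Type*} [CommRing R]

theorem algebraicIndependent_X_pow {n : ℕ} (hn : 0 < n) :
    AlgebraicIndependent R fun i : σ ↦ (X i : MvPolynomial σ R) ^ n := by
  rw [algebraicIndependent_iff_injective_aeval]
  convert expand_injective (σ := σ) (R := R) hn
  ext i : 1
  simp [expand_X]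

noncomputable def scaleVars : MvPolynomial σ R →ₐ[R] Polynomial (MvPolynomial σ R) :=
  aeval fun i ↦ Polynomial.C (X i) * Polynomial.X

theorem scaleVars_X (i : σ) :
    scaleVars (X i : MvPolynomial σ R) = Polynomial.C (X i) * Polynomial.X :=
  aeval_X _ i

theorem scaleVars_C (r : R) : scaleVars (C r : MvPolynomial σ R) = Polynomial.C (C r) :=
  aeval_C _ r

theorem scaleVars_monomial (s : σ →₀ ℕ) (c : R) :
    scaleVars (monomial s c) = Polynomial.C (monomial s c) * Polynomial.X ^ s.degree := by
  rw [scaleVars, aeval_monomial, monomial_eq, Finsupp.prod, Finsupp.prod]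
  simp only [mul_pow, Finset.prod_mul_distrib, Finset.prod_pow_eq_pow_sum, map_mul, map_prod,
    map_pow, Polynomial.algebraMap_apply, algebraMap_eq, mul_assoc]
  rfl

theorem IsHomogeneous.scaleVars_eq {f : MvPolynomial σ R} {d : ℕ} (hf : f.IsHomogeneous d) :
    scaleVars f = Polynomial.C f * Polynomial.X ^ d := by
  conv_lhs => rw [← f.support_sum_monomial_coeff]
  conv_rhs => rw [← f.support_sum_monomial_coeff]
  rw [map_sum, map_sum, Finset.sum_mul]
  refine Finset.sum_congr rfl fun s hs ↦ ?_
  rw [scaleVars_monomial, ← hf (mem_support_iff.mp hs), Finsupp.degree_eq_weight_one]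
  rfl

variable [Fintype σ]

noncomputable def vectorFieldDerivation (P : σ → MvPolynomial σ R) :
    Derivation R (MvPolynomial σ R) (MvPolynomial σ R) :=
  ∑ i, P i • pderiv i

theorem vectorFieldDerivation_apply (P : σ → MvPolynomial σ R) (f : MvPolynomial σ R) :
    vectorFieldDerivation P f = ∑ i, P i * pderiv i f := by
  rw [vectorFieldDerivation, ← Derivation.coeFnAddMonoidHom_apply, map_sum, Finset.sum_apply]
  rfl

theorem vectorFieldDerivation_X [DecidableEq σ] (P : σ → MvPolynomial σ R) (i : σ) :
    vectorFieldDerivation P (X i) = P i := by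
  simp [vectorFieldDerivation_apply, pderiv_X, Pi.single_apply]

end MvPolynomial

theorem chi_eq_vectorFieldDerivation (P : Fin 4 → MvPolynomial (Fin 4) ℝ) :
    chi P = vectorFieldDerivation P := by
  ext f : 1
  rw [chi, vectorFieldDerivation_apply]

theorem chi_X_sq_add_X_sq (P : Fin 4 → MvPolynomial (Fin 4) ℝ) (i j : Fin 4) :
    chi P (X i ^ 2 + X j ^ 2) = 2 * (X i * P i + X j * P j) := by
  simp only [chi_eq_vectorFieldDerivation, map_add, Derivation.leibniz_pow, Nat.add_one_sub_one,
    pow_one, vectorFieldDerivation_X, smul_eq_mul, nsmul_eq_mul, Nat.cast_ofNat]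
  ring

theorem isHomogeneous_chi_X_sq_add_X_sq {P : Fin 4 → MvPolynomial (Fin 4) ℝ} {n : ℕ}
    (hP : ∀ i, (P i).IsHomogeneous n) (i j : Fin 4) :
    (chi P (X i ^ 2 + X j ^ 2)).IsHomogeneous (n + 1) := by
  rw [chi_X_sq_add_X_sq, add_comm n]
  exact (((isHomogeneous_X ℝ i).mul (hP i)).add ((isHomogeneous_X ℝ j).mul (hP j))).C_mul 2

theorem derivation_Ga (D : Derivation ℝ (MvPolynomial (Fin 4) ℝ) (MvPolynomial (Fin 4) ℝ))
    (a : ℝ) :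
    D (Ga a) = 2 * (X 0 ^ 2 + X 1 ^ 2 - C (a ^ 2)) * D (X 0 ^ 2 + X 1 ^ 2)
      + D (X 2 ^ 2 + X 3 ^ 2) := by
  have hC : D (C (a ^ 2)) = 0 := D.map_algebraMap _
  simp only [Ga, map_add, map_sub, D.leibniz_pow, hC, D.map_one_eq_zero, smul_eq_mul,
    nsmul_eq_mul]
  push_cast
  ring

theorem scaleVars_Ga (a : ℝ) :
    scaleVars (Ga a) = Polynomial.C ((X 0 ^ 2 + X 1 ^ 2) ^ 2) * Polynomial.X ^ 4
      + Polynomial.C (X 2 ^ 2 + X 3 ^ 2 - 2 * C (a ^ 2) * (X 0 ^ 2 + X 1 ^ 2)) * Polynomial.X ^ 2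
      + Polynomial.C (C (a ^ 4 - 1)) := by
  simp only [Ga, map_add, map_sub, map_mul, map_pow, map_one, map_ofNat, scaleVars_X,
    scaleVars_C]
  ring

theorem coeff_zero_scaleVars_Ga (a : ℝ) : (scaleVars (Ga a)).coeff 0 = C (a ^ 4 - 1) := by
  simp only [scaleVars_Ga, Polynomial.coeff_add, Polynomial.coeff_C_mul_X_pow,
    Polynomial.coeff_C_zero, if_neg (by norm_num : (0 : ℕ) ≠ 4),
    if_neg (by norm_num : (0 : ℕ) ≠ 2), zero_add]

theorem coeff_four_scaleVars_Ga (a : ℝ) :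
    (scaleVars (Ga a)).coeff 4 = (X 0 ^ 2 + X 1 ^ 2) ^ 2 := by
  simp only [scaleVars_Ga, Polynomial.coeff_add, Polynomial.coeff_C_mul_X_pow,
    Polynomial.coeff_C, if_true, if_neg (by norm_num : (4 : ℕ) ≠ 2),
    if_neg (by norm_num : (4 : ℕ) ≠ 0), add_zero]

theorem scaleVars_chi_Ga {P : Fin 4 → MvPolynomial (Fin 4) ℝ} {n : ℕ}
    (hP : ∀ i, (P i).IsHomogeneous n) (a : ℝ) :
    scaleVars (chi P (Ga a)) = Polynomial.X ^ (n + 1) *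
      (Polynomial.C (2 * (X 0 ^ 2 + X 1 ^ 2) * chi P (X 0 ^ 2 + X 1 ^ 2)) * Polynomial.X ^ 2
        + Polynomial.C (chi P (X 2 ^ 2 + X 3 ^ 2) - 2 * C (a ^ 2) * chi P (X 0 ^ 2 + X 1 ^ 2)))
    := by
  rw [chi_eq_vectorFieldDerivation, derivation_Ga, ← chi_eq_vectorFieldDerivation]
  simp only [map_add, map_sub, map_mul, map_pow, map_ofNat, scaleVars_X, scaleVars_C,
    (isHomogeneous_chi_X_sq_add_X_sq hP _ _).scaleVars_eq]
  ring

theorem X_sq_add_X_sq_ne_zero {σ : Type*} (i j : σ) :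
    (X i ^ 2 + X j ^ 2 : MvPolynomial σ ℝ) ≠ 0 := by
  intro h
  simpa using congrArg (eval fun _ ↦ 1) h

theorem algebraicIndependent_sum_sq :
    AlgebraicIndependent ℝ
      ![(X 0 ^ 2 + X 1 ^ 2 : MvPolynomial (Fin 4) ℝ), X 2 ^ 2 + X 3 ^ 2] := by
  refine AlgebraicIndependent.of_comp
    (aeval ![X 0, 0, X 1, 0] : MvPolynomial (Fin 4) ℝ →ₐ[ℝ] MvPolynomial (Fin 2) ℝ) ?_
  convert algebraicIndependent_X_pow (σ := Fin 2) (R := ℝ) two_pos with i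
  fin_cases i <;> simp

theorem stmt_11 (a : ℝ) (ha : 1 < a) (n : ℕ) (P : Fin 4 → MvPolynomial (Fin 4) ℝ)
    (hhom : ∀ i, (P i).IsHomogeneous n)
    (hvf : ∃ K : MvPolynomial (Fin 4) ℝ, chi P (Ga a) = K * Ga a) :
    chi P (X 0 ^ 2 + X 1 ^ 2) = 0 ∧
    chi P (X 2 ^ 2 + X 3 ^ 2) = 0 ∧
    AlgebraicIndependent ℝ
      ![(X 0 ^ 2 + X 1 ^ 2 : MvPolynomial (Fin 4) ℝ), X 2 ^ 2 + X 3 ^ 2] := by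
  obtain ⟨K, hK⟩ := hvf
  have hscale := scaleVars_chi_Ga hhom a
  rw [hK, map_mul] at hscale
  have hH := X_sq_add_X_sq_ne_zero (0 : Fin 4) 1
  have hK₀ : scaleVars K = 0 := by
    refine Polynomial.eq_zero_of_mul_eq_X_pow_mul hscale (d := 4) ?_ ?_ (by compute_degree!)
    · rw [coeff_zero_scaleVars_Ga, Ne, C_eq_zero, sub_eq_zero]
      exact (one_lt_pow₀ ha four_ne_zero).ne'
    · rw [coeff_four_scaleVars_Ga]
      exact pow_ne_zero 2 hH
  rw [hK₀, zero_mul, eq_comm, mul_eq_zero, or_iff_right (pow_ne_zero _ Polynomial.X_ne_zero)]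
    at hscale
  obtain ⟨hHA, hB⟩ := Polynomial.eq_zero_and_eq_zero_of_C_mul_X_pow_add_C two_ne_zero hscale
  have hA : chi P (X 0 ^ 2 + X 1 ^ 2) = 0 := by simpa [hH] using hHA
  exact ⟨hA, by simpa [hA] using hB, algebraicIndependent_sum_sq⟩
end

section
/- There is no degree-one polynomial diffeomorphism from S¹×S² onto S²×S¹: for all real numbers a > 1 and b > 1, there is no bijective affine map F : ℝ⁴ → ℝ⁴ (i.e., F(x) = Mx + v with M an invertible 4×4 real matrix and v ∈ ℝ⁴) that maps the set S¹×S² = {x ∈ ℝ⁴ : (x₁²+x₂²−a²)² + x₃² + x₄² − 1 = 0} onto the set S²×S¹ = {x ∈ ℝ⁴ : (x₁²+x₂²+x₃²−b²)² + x₄² − 1 = 0}. -/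
set_option maxHeartbeats 1000000

private lemma pos_of_ne {c0 c1 : ℝ} (hc : c0 ≠ 0 ∨ c1 ≠ 0) : 0 < c0^2 + c1^2 := by
  rcases hc with h | h
  · have h1 : 0 < c0^2 := by positivity
    nlinarith [sq_nonneg c1]
  · have h1 : 0 < c1^2 := by positivity
    nlinarith [sq_nonneg c0]

private lemma det3 (t2 u2 t3 u3 t4 u4 A0 B0 A1 B1 A2 B2 e20 e21 e22 e30 e31 e32 e40 e41 e42 : ℝ)
    (h20 : t2*A0 + u2*B0 = e20) (h21 : t2*A1 + u2*B1 = e21) (h22 : t2*A2 + u2*B2 = e22)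
    (h30 : t3*A0 + u3*B0 = e30) (h31 : t3*A1 + u3*B1 = e31) (h32 : t3*A2 + u3*B2 = e32)
    (h40 : t4*A0 + u4*B0 = e40) (h41 : t4*A1 + u4*B1 = e41) (h42 : t4*A2 + u4*B2 = e42) :
    e20*(e31*e42 - e32*e41) - e30*(e21*e42 - e22*e41) + e40*(e21*e32 - e22*e31) = 0 := by
  rw [← h20, ← h21, ← h22, ← h30, ← h31, ← h32, ← h40, ← h41, ← h42]; ring

private lemma lemA (a c0 c1 c2 c3 : ℝ) (p : Fin 4 → ℝ)
    (hc : c0 ≠ 0 ∨ c1 ≠ 0)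
    (hmax : ∀ x : Fin 4 → ℝ,
      ((x 0) ^ 2 + (x 1) ^ 2 - a ^ 2) ^ 2 + (x 2) ^ 2 + (x 3) ^ 2 - 1 = 0 →
      c0 * x 0 + c1 * x 1 + c2 * x 2 + c3 * x 3 ≤ c0 * p 0 + c1 * p 1 + c2 * p 2 + c3 * p 3)
    (hp : ((p 0) ^ 2 + (p 1) ^ 2 - a ^ 2) ^ 2 + (p 2) ^ 2 + (p 3) ^ 2 - 1 = 0) :
    c1 * p 0 = c0 * p 1 := by
  have hγ2 : 0 < c0^2 + c1^2 := pos_of_ne hc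
  set γ := Real.sqrt (c0^2 + c1^2) with hγdef
  have hγpos : 0 < γ := Real.sqrt_pos.mpr hγ2
  have hγsq : γ^2 = c0^2 + c1^2 := Real.sq_sqrt hγ2.le
  have hγne : γ ≠ 0 := ne_of_gt hγpos
  set r := Real.sqrt ((p 0)^2 + (p 1)^2) with hrdef
  have hr0 : 0 ≤ r := Real.sqrt_nonneg _
  have hrsq : r^2 = (p 0)^2 + (p 1)^2 := Real.sq_sqrt (by positivity)
  have hxy : (r*c0/γ)^2 + (r*c1/γ)^2 = (p 0)^2 + (p 1)^2 := by
    calc (r*c0/γ)^2 + (r*c1/γ)^2 = r^2*(c0^2+c1^2)/γ^2 := by ring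
      _ = r^2 := by rw [← hγsq]; field_simp
      _ = _ := hrsq
  have hq := hmax ![r*c0/γ, r*c1/γ, p 2, p 3] (by
    simp only [Matrix.cons_val_zero, Matrix.cons_val_one, Matrix.head_cons,
      Matrix.cons_val_two, Matrix.tail_cons, Matrix.cons_val_three]
    rw [hxy]; exact hp)
  simp only [Matrix.cons_val_zero, Matrix.cons_val_one, Matrix.head_cons,
    Matrix.cons_val_two, Matrix.tail_cons, Matrix.cons_val_three] at hq
  have he : c0*(r*c0/γ) + c1*(r*c1/γ) = r*γ := by
    calc c0*(r*c0/γ) + c1*(r*c1/γ) = r*(c0^2+c1^2)/γ := by ring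
      _ = r*γ := by rw [← hγsq]; field_simp
  have h2 : r * γ ≤ c0 * p 0 + c1 * p 1 := by nlinarith [hq, he]
  have h3 : 0 ≤ r * γ := mul_nonneg hr0 hγpos.le
  have h4 : (c0 * p 0 + c1 * p 1)^2 ≥ r^2 * γ^2 := by nlinarith
  have hid : r^2 * γ^2 = (c0 * p 0 + c1 * p 1)^2 + (c0 * p 1 - c1 * p 0)^2 := by
    rw [hrsq, hγsq]; ring
  have h5 : (c0 * p 1 - c1 * p 0)^2 ≤ 0 := by linarith
  have h7 : (c0 * p 1 - c1 * p 0)^2 = 0 := le_antisymm h5 (sq_nonneg _)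
  have h8 : c0 * p 1 - c1 * p 0 = 0 := by
    exact (pow_eq_zero_iff (by norm_num : (2:ℕ) ≠ 0)).mp h7
  linarith

private lemma lemB (a c0 c1 c2 c3 : ℝ) (p : Fin 4 → ℝ)
    (hc : c2 ≠ 0 ∨ c3 ≠ 0)
    (hmax : ∀ x : Fin 4 → ℝ,
      ((x 0) ^ 2 + (x 1) ^ 2 - a ^ 2) ^ 2 + (x 2) ^ 2 + (x 3) ^ 2 - 1 = 0 →
      c0 * x 0 + c1 * x 1 + c2 * x 2 + c3 * x 3 ≤ c0 * p 0 + c1 * p 1 + c2 * p 2 + c3 * p 3)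
    (hp : ((p 0) ^ 2 + (p 1) ^ 2 - a ^ 2) ^ 2 + (p 2) ^ 2 + (p 3) ^ 2 - 1 = 0) :
    c3 * p 2 = c2 * p 3 := by
  have hδ2 : 0 < c2^2 + c3^2 := pos_of_ne hc
  set δ := Real.sqrt (c2^2 + c3^2) with hδdef
  have hδpos : 0 < δ := Real.sqrt_pos.mpr hδ2
  have hδsq : δ^2 = c2^2 + c3^2 := Real.sq_sqrt hδ2.le
  have hδne : δ ≠ 0 := ne_of_gt hδpos
  set s := Real.sqrt ((p 2)^2 + (p 3)^2) with hsdef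
  have hs0 : 0 ≤ s := Real.sqrt_nonneg _
  have hssq : s^2 = (p 2)^2 + (p 3)^2 := Real.sq_sqrt (by positivity)
  have hxy : (s*c2/δ)^2 + (s*c3/δ)^2 = (p 2)^2 + (p 3)^2 := by
    calc (s*c2/δ)^2 + (s*c3/δ)^2 = s^2*(c2^2+c3^2)/δ^2 := by ring
      _ = s^2 := by rw [← hδsq]; field_simp
      _ = _ := hssq
  have hq := hmax ![p 0, p 1, s*c2/δ, s*c3/δ] (by
    simp only [Matrix.cons_val_zero, Matrix.cons_val_one, Matrix.head_cons,
      Matrix.cons_val_two, Matrix.tail_cons, Matrix.cons_val_three]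
    linear_combination hp + hxy)
  simp only [Matrix.cons_val_zero, Matrix.cons_val_one, Matrix.head_cons,
    Matrix.cons_val_two, Matrix.tail_cons, Matrix.cons_val_three] at hq
  have he : c2*(s*c2/δ) + c3*(s*c3/δ) = s*δ := by
    calc c2*(s*c2/δ) + c3*(s*c3/δ) = s*(c2^2+c3^2)/δ := by ring
      _ = s*δ := by rw [← hδsq]; field_simp
  have h2 : s * δ ≤ c2 * p 2 + c3 * p 3 := by nlinarith [hq, he]
  have h3 : 0 ≤ s * δ := mul_nonneg hs0 hδpos.le
  have h4 : (c2 * p 2 + c3 * p 3)^2 ≥ s^2 * δ^2 := by nlinarith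
  have hid : s^2 * δ^2 = (c2 * p 2 + c3 * p 3)^2 + (c2 * p 3 - c3 * p 2)^2 := by
    rw [hssq, hδsq]; ring
  have h5 : (c2 * p 3 - c3 * p 2)^2 ≤ 0 := by linarith
  have h7 : (c2 * p 3 - c3 * p 2)^2 = 0 := le_antisymm h5 (sq_nonneg _)
  have h8 : c2 * p 3 - c3 * p 2 = 0 := by
    exact (pow_eq_zero_iff (by norm_num : (2:ℕ) ≠ 0)).mp h7
  linarith

private lemma lemC (a c0 c1 c2 c3 : ℝ) (ha : 1 < a) (p : Fin 4 → ℝ)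
    (hc : c0 ≠ 0 ∨ c1 ≠ 0) (hc2 : c2 = 0) (hc3 : c3 = 0)
    (hmax : ∀ x : Fin 4 → ℝ,
      ((x 0) ^ 2 + (x 1) ^ 2 - a ^ 2) ^ 2 + (x 2) ^ 2 + (x 3) ^ 2 - 1 = 0 →
      c0 * x 0 + c1 * x 1 + c2 * x 2 + c3 * x 3 ≤ c0 * p 0 + c1 * p 1 + c2 * p 2 + c3 * p 3)
    (hp : ((p 0) ^ 2 + (p 1) ^ 2 - a ^ 2) ^ 2 + (p 2) ^ 2 + (p 3) ^ 2 - 1 = 0) :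
    p 2 = 0 ∧ p 3 = 0 := by
  subst hc2 hc3
  have hγ2 : 0 < c0^2 + c1^2 := pos_of_ne hc
  set γ := Real.sqrt (c0^2 + c1^2) with hγdef
  have hγpos : 0 < γ := Real.sqrt_pos.mpr hγ2
  have hγsq : γ^2 = c0^2 + c1^2 := Real.sq_sqrt hγ2.le
  have hγne : γ ≠ 0 := ne_of_gt hγpos
  have haR : (0:ℝ) < a^2 + 1 := by positivity
  set R := Real.sqrt (a^2 + 1) with hRdef
  have hRpos : 0 < R := Real.sqrt_pos.mpr haR
  have hRsq : R^2 = a^2 + 1 := Real.sq_sqrt haR.le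
  have hxy : (R*c0/γ)^2 + (R*c1/γ)^2 = a^2 + 1 := by
    calc (R*c0/γ)^2 + (R*c1/γ)^2 = R^2*(c0^2+c1^2)/γ^2 := by ring
      _ = R^2 := by rw [← hγsq]; field_simp
      _ = _ := hRsq
  have hq := hmax ![R*c0/γ, R*c1/γ, 0, 0] (by
    simp only [Matrix.cons_val_zero, Matrix.cons_val_one, Matrix.head_cons,
      Matrix.cons_val_two, Matrix.tail_cons, Matrix.cons_val_three]
    rw [hxy]; ring)
  simp only [Matrix.cons_val_zero, Matrix.cons_val_one, Matrix.head_cons,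
    Matrix.cons_val_two, Matrix.tail_cons, Matrix.cons_val_three] at hq
  have he : c0*(R*c0/γ) + c1*(R*c1/γ) = R*γ := by
    calc c0*(R*c0/γ) + c1*(R*c1/γ) = R*(c0^2+c1^2)/γ := by ring
      _ = R*γ := by rw [← hγsq]; field_simp
  have h2 : R * γ ≤ c0 * p 0 + c1 * p 1 := by nlinarith [hq, he]
  have h3 : 0 ≤ R * γ := mul_nonneg hRpos.le hγpos.le
  -- p 0^2 + p 1^2 ≤ a^2 + 1
  have h8 : (p 0)^2 + (p 1)^2 ≤ a^2 + 1 := by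
    nlinarith [hp, sq_nonneg (p 2), sq_nonneg (p 3), sq_nonneg ((p 0)^2 + (p 1)^2 - a^2 - 1), sq_nonneg ((p 0)^2 + (p 1)^2 - a^2 + 1)]
  -- Cauchy-Schwarz
  have hcs : (c0 * p 0 + c1 * p 1)^2 ≤ (c0^2 + c1^2) * ((p 0)^2 + (p 1)^2) := by
    nlinarith [sq_nonneg (c0 * p 1 - c1 * p 0)]
  have h4 : (c0 * p 0 + c1 * p 1)^2 ≥ R^2 * γ^2 := by nlinarith
  have h9 : a^2 + 1 ≤ (p 0)^2 + (p 1)^2 := by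
    rw [hRsq] at h4
    nlinarith [hγ2]
  have h10 : (p 0)^2 + (p 1)^2 = a^2 + 1 := le_antisymm h8 h9
  have h11 : (p 2)^2 + (p 3)^2 = 0 := by
    rw [h10] at hp; nlinarith [hp]
  constructor <;> nlinarith [sq_nonneg (p 2), sq_nonneg (p 3)]

private lemma pos_of_ne' {c0 c1 : ℝ} (hc : c0 ≠ 0 ∨ c1 ≠ 0) : 0 < c0^2 + c1^2 := by
  rcases hc with h | h
  · have h1 : 0 < c0^2 := by positivity
    nlinarith [sq_nonneg c1]
  · have h1 : 0 < c1^2 := by positivity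
    nlinarith [sq_nonneg c0]

private lemma det3' (t2 u2 t3 u3 t4 u4 A0 B0 A1 B1 A2 B2 e20 e21 e22 e30 e31 e32 e40 e41 e42 : ℝ)
    (h20 : t2*A0 + u2*B0 = e20) (h21 : t2*A1 + u2*B1 = e21) (h22 : t2*A2 + u2*B2 = e22)
    (h30 : t3*A0 + u3*B0 = e30) (h31 : t3*A1 + u3*B1 = e31) (h32 : t3*A2 + u3*B2 = e32)
    (h40 : t4*A0 + u4*B0 = e40) (h41 : t4*A1 + u4*B1 = e41) (h42 : t4*A2 + u4*B2 = e42) :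
    e20*(e31*e42 - e32*e41) - e30*(e21*e42 - e22*e41) + e40*(e21*e32 - e22*e31) = 0 := by
  rw [← h20, ← h21, ← h22, ← h30, ← h31, ← h32, ← h40, ← h41, ← h42]; ring

private lemma finalcontra (b : ℝ) (hb : 1 < b) (t2 u2 t3 u3 t4 u4 A0 B0 A1 B1 A2 B2 : ℝ)
    (h20 : t2*A0+u2*B0 = -(2*b)) (h21 : t2*A1+u2*B1 = 0) (h22 : t2*A2+u2*B2 = 0)
    (h30 : t3*A0+u3*B0 = -b) (h31 : t3*A1+u3*B1 = b) (h32 : t3*A2+u3*B2 = 0)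
    (h40 : t4*A0+u4*B0 = -b) (h41 : t4*A1+u4*B1 = 0) (h42 : t4*A2+u4*B2 = b) : False := by
  have hdet := det3' t2 u2 t3 u3 t4 u4 A0 B0 A1 B1 A2 B2 _ _ _ _ _ _ _ _ _
    h20 h21 h22 h30 h31 h32 h40 h41 h42
  have hb0 : (0:ℝ) < b := by linarith
  nlinarith [hdet, mul_pos (mul_pos hb0 hb0) hb0]

theorem stmt_19 (a b : ℝ) (ha : 1 < a) (hb : 1 < b) :
    ¬ ∃ (M : Matrix (Fin 4) (Fin 4) ℝ) (v : Fin 4 → ℝ),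
      IsUnit M ∧
      (fun x : Fin 4 → ℝ => M.mulVec x + v) ''
          {x : Fin 4 → ℝ |
            ((x 0) ^ 2 + (x 1) ^ 2 - a ^ 2) ^ 2 + (x 2) ^ 2 + (x 3) ^ 2 - 1 = 0} =
        {x : Fin 4 → ℝ |
            ((x 0) ^ 2 + (x 1) ^ 2 + (x 2) ^ 2 - b ^ 2) ^ 2 + (x 3) ^ 2 - 1 = 0} := by
  rintro ⟨M, v, hM, hset⟩
  have hmv : ∀ (x : Fin 4 → ℝ) (j : Fin 4), (M.mulVec x + v) j
      = M j 0 * x 0 + M j 1 * x 1 + M j 2 * x 2 + M j 3 * x 3 + v j := by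
    intro x j
    simp [Matrix.mulVec, dotProduct, Fin.sum_univ_four]
  have himg : ∀ x : Fin 4 → ℝ,
      ((x 0) ^ 2 + (x 1) ^ 2 - a ^ 2) ^ 2 + (x 2) ^ 2 + (x 3) ^ 2 - 1 = 0 →
      (((M.mulVec x + v) 0) ^ 2 + ((M.mulVec x + v) 1) ^ 2 + ((M.mulVec x + v) 2) ^ 2 - b ^ 2) ^ 2
        + ((M.mulVec x + v) 3) ^ 2 - 1 = 0 := by
    intro x hx
    have hmem : (M.mulVec x + v) ∈ {x : Fin 4 → ℝ |
        ((x 0) ^ 2 + (x 1) ^ 2 + (x 2) ^ 2 - b ^ 2) ^ 2 + (x 3) ^ 2 - 1 = 0} := by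
      rw [← hset]; exact Set.mem_image_of_mem _ hx
    exact hmem
  have hub : ∀ x : Fin 4 → ℝ,
      ((x 0) ^ 2 + (x 1) ^ 2 - a ^ 2) ^ 2 + (x 2) ^ 2 + (x 3) ^ 2 - 1 = 0 →
      M 3 0 * x 0 + M 3 1 * x 1 + M 3 2 * x 2 + M 3 3 * x 3 + v 3 ≤ 1 := by
    intro x hx
    have h1 := himg x hx
    have h2 : ((M.mulVec x + v) 3) ^ 2 ≤ 1 := by
      nlinarith [sq_nonneg (((M.mulVec x + v) 0) ^ 2 + ((M.mulVec x + v) 1) ^ 2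
        + ((M.mulVec x + v) 2) ^ 2 - b ^ 2)]
    have h3 : (M.mulVec x + v) 3 ≤ 1 := by nlinarith
    rw [hmv x 3] at h3; exact h3
  -- five explicit points of the target set
  have hy1 : (![b, 0, 0, 1] : Fin 4 → ℝ) ∈ {x : Fin 4 → ℝ |
      ((x 0) ^ 2 + (x 1) ^ 2 + (x 2) ^ 2 - b ^ 2) ^ 2 + (x 3) ^ 2 - 1 = 0} := by
    simp [Set.mem_setOf_eq]
  have hy2 : (![-b, 0, 0, 1] : Fin 4 → ℝ) ∈ {x : Fin 4 → ℝ |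
      ((x 0) ^ 2 + (x 1) ^ 2 + (x 2) ^ 2 - b ^ 2) ^ 2 + (x 3) ^ 2 - 1 = 0} := by
    simp [Set.mem_setOf_eq]
  have hy3 : (![0, b, 0, 1] : Fin 4 → ℝ) ∈ {x : Fin 4 → ℝ |
      ((x 0) ^ 2 + (x 1) ^ 2 + (x 2) ^ 2 - b ^ 2) ^ 2 + (x 3) ^ 2 - 1 = 0} := by
    simp [Set.mem_setOf_eq]
  have hy4 : (![0, 0, b, 1] : Fin 4 → ℝ) ∈ {x : Fin 4 → ℝ |
      ((x 0) ^ 2 + (x 1) ^ 2 + (x 2) ^ 2 - b ^ 2) ^ 2 + (x 3) ^ 2 - 1 = 0} := by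
    simp [Set.mem_setOf_eq]
  have hy5 : (![b, 0, 0, -1] : Fin 4 → ℝ) ∈ {x : Fin 4 → ℝ |
      ((x 0) ^ 2 + (x 1) ^ 2 + (x 2) ^ 2 - b ^ 2) ^ 2 + (x 3) ^ 2 - 1 = 0} := by
    simp [Set.mem_setOf_eq]
  rw [← hset] at hy1 hy2 hy3 hy4 hy5
  obtain ⟨x1, hx1A, hx1F⟩ := hy1
  obtain ⟨x2, hx2A, hx2F⟩ := hy2
  obtain ⟨x3, hx3A, hx3F⟩ := hy3
  obtain ⟨x4, hx4A, hx4F⟩ := hy4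
  obtain ⟨x5, hx5A, hx5F⟩ := hy5
  simp only [Set.mem_setOf_eq] at hx1A hx2A hx3A hx4A hx5A
  have Ex1 : ∀ j, M j 0 * x1 0 + M j 1 * x1 1 + M j 2 * x1 2 + M j 3 * x1 3 + v j
      = (![b, 0, 0, 1] : Fin 4 → ℝ) j := by
    intro j; rw [← hmv]; exact congrFun hx1F j
  have Ex2 : ∀ j, M j 0 * x2 0 + M j 1 * x2 1 + M j 2 * x2 2 + M j 3 * x2 3 + v j
      = (![-b, 0, 0, 1] : Fin 4 → ℝ) j := by
    intro j; rw [← hmv]; exact congrFun hx2F j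
  have Ex3 : ∀ j, M j 0 * x3 0 + M j 1 * x3 1 + M j 2 * x3 2 + M j 3 * x3 3 + v j
      = (![0, b, 0, 1] : Fin 4 → ℝ) j := by
    intro j; rw [← hmv]; exact congrFun hx3F j
  have Ex4 : ∀ j, M j 0 * x4 0 + M j 1 * x4 1 + M j 2 * x4 2 + M j 3 * x4 3 + v j
      = (![0, 0, b, 1] : Fin 4 → ℝ) j := by
    intro j; rw [← hmv]; exact congrFun hx4F j
  have Ex5 : ∀ j, M j 0 * x5 0 + M j 1 * x5 1 + M j 2 * x5 2 + M j 3 * x5 3 + v j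
      = (![b, 0, 0, -1] : Fin 4 → ℝ) j := by
    intro j; rw [← hmv]; exact congrFun hx5F j
  -- linear-functional values at the four top points
  have L1 : M 3 0 * x1 0 + M 3 1 * x1 1 + M 3 2 * x1 2 + M 3 3 * x1 3 + v 3 = 1 := by
    simpa using Ex1 3
  have L2 : M 3 0 * x2 0 + M 3 1 * x2 1 + M 3 2 * x2 2 + M 3 3 * x2 3 + v 3 = 1 := by
    simpa using Ex2 3
  have L3 : M 3 0 * x3 0 + M 3 1 * x3 1 + M 3 2 * x3 2 + M 3 3 * x3 3 + v 3 = 1 := by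
    simpa using Ex3 3
  have L4 : M 3 0 * x4 0 + M 3 1 * x4 1 + M 3 2 * x4 2 + M 3 3 * x4 3 + v 3 = 1 := by
    simpa using Ex4 3
  have L5 : M 3 0 * x5 0 + M 3 1 * x5 1 + M 3 2 * x5 2 + M 3 3 * x5 3 + v 3 = -1 := by
    simpa using Ex5 3
  -- each xi is a maximizer of the linear functional on the source set
  have hmax1 : ∀ x : Fin 4 → ℝ,
      ((x 0) ^ 2 + (x 1) ^ 2 - a ^ 2) ^ 2 + (x 2) ^ 2 + (x 3) ^ 2 - 1 = 0 →
      M 3 0 * x 0 + M 3 1 * x 1 + M 3 2 * x 2 + M 3 3 * x 3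
        ≤ M 3 0 * x1 0 + M 3 1 * x1 1 + M 3 2 * x1 2 + M 3 3 * x1 3 := by
    intro x hx; have := hub x hx; linarith
  have hmax2 : ∀ x : Fin 4 → ℝ,
      ((x 0) ^ 2 + (x 1) ^ 2 - a ^ 2) ^ 2 + (x 2) ^ 2 + (x 3) ^ 2 - 1 = 0 →
      M 3 0 * x 0 + M 3 1 * x 1 + M 3 2 * x 2 + M 3 3 * x 3
        ≤ M 3 0 * x2 0 + M 3 1 * x2 1 + M 3 2 * x2 2 + M 3 3 * x2 3 := by
    intro x hx; have := hub x hx; linarith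
  have hmax3 : ∀ x : Fin 4 → ℝ,
      ((x 0) ^ 2 + (x 1) ^ 2 - a ^ 2) ^ 2 + (x 2) ^ 2 + (x 3) ^ 2 - 1 = 0 →
      M 3 0 * x 0 + M 3 1 * x 1 + M 3 2 * x 2 + M 3 3 * x 3
        ≤ M 3 0 * x3 0 + M 3 1 * x3 1 + M 3 2 * x3 2 + M 3 3 * x3 3 := by
    intro x hx; have := hub x hx; linarith
  have hmax4 : ∀ x : Fin 4 → ℝ,
      ((x 0) ^ 2 + (x 1) ^ 2 - a ^ 2) ^ 2 + (x 2) ^ 2 + (x 3) ^ 2 - 1 = 0 →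
      M 3 0 * x 0 + M 3 1 * x 1 + M 3 2 * x 2 + M 3 3 * x 3
        ≤ M 3 0 * x4 0 + M 3 1 * x4 1 + M 3 2 * x4 2 + M 3 3 * x4 3 := by
    intro x hx; have := hub x hx; linarith
  -- difference equations (rows j = 0,1,2)
  have D20 : M 0 0 * (x2 0 - x1 0) + M 0 1 * (x2 1 - x1 1) + M 0 2 * (x2 2 - x1 2)
      + M 0 3 * (x2 3 - x1 3) = -(2*b) := by
    have h := Ex2 0; have h' := Ex1 0; simp at h h'; linear_combination h - h'
  have D21 : M 1 0 * (x2 0 - x1 0) + M 1 1 * (x2 1 - x1 1) + M 1 2 * (x2 2 - x1 2)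
      + M 1 3 * (x2 3 - x1 3) = 0 := by
    have h := Ex2 1; have h' := Ex1 1; simp at h h'; linear_combination h - h'
  have D22 : M 2 0 * (x2 0 - x1 0) + M 2 1 * (x2 1 - x1 1) + M 2 2 * (x2 2 - x1 2)
      + M 2 3 * (x2 3 - x1 3) = 0 := by
    have h := Ex2 2; have h' := Ex1 2; simp at h h'; linear_combination h - h'
  have D30 : M 0 0 * (x3 0 - x1 0) + M 0 1 * (x3 1 - x1 1) + M 0 2 * (x3 2 - x1 2)
      + M 0 3 * (x3 3 - x1 3) = -b := by
    have h := Ex3 0; have h' := Ex1 0; simp at h h'; linear_combination h - h'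
  have D31 : M 1 0 * (x3 0 - x1 0) + M 1 1 * (x3 1 - x1 1) + M 1 2 * (x3 2 - x1 2)
      + M 1 3 * (x3 3 - x1 3) = b := by
    have h := Ex3 1; have h' := Ex1 1; simp at h h'; linear_combination h - h'
  have D32 : M 2 0 * (x3 0 - x1 0) + M 2 1 * (x3 1 - x1 1) + M 2 2 * (x3 2 - x1 2)
      + M 2 3 * (x3 3 - x1 3) = 0 := by
    have h := Ex3 2; have h' := Ex1 2; simp at h h'; linear_combination h - h'
  have D40 : M 0 0 * (x4 0 - x1 0) + M 0 1 * (x4 1 - x1 1) + M 0 2 * (x4 2 - x1 2)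
      + M 0 3 * (x4 3 - x1 3) = -b := by
    have h := Ex4 0; have h' := Ex1 0; simp at h h'; linear_combination h - h'
  have D41 : M 1 0 * (x4 0 - x1 0) + M 1 1 * (x4 1 - x1 1) + M 1 2 * (x4 2 - x1 2)
      + M 1 3 * (x4 3 - x1 3) = 0 := by
    have h := Ex4 1; have h' := Ex1 1; simp at h h'; linear_combination h - h'
  have D42 : M 2 0 * (x4 0 - x1 0) + M 2 1 * (x4 1 - x1 1) + M 2 2 * (x4 2 - x1 2)
      + M 2 3 * (x4 3 - x1 3) = b := by
    have h := Ex4 2; have h' := Ex1 2; simp at h h'; linear_combination h - h'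

  by_cases h01 : M 3 0 = 0 ∧ M 3 1 = 0
  · by_cases h23 : M 3 2 = 0 ∧ M 3 3 = 0
    · -- the whole bottom row of M vanishes: impossible
      have hcontra : (2:ℝ) = 0 := by
        linear_combination L5 - L1 + (x1 0 - x5 0) * h01.1 + (x1 1 - x5 1) * h01.2
          + (x1 2 - x5 2) * h23.1 + (x1 3 - x5 3) * h23.2
      norm_num at hcontra
    · -- c0 = c1 = 0, (c2,c3) ≠ 0
      have hc23 : M 3 2 ≠ 0 ∨ M 3 3 ≠ 0 := not_and_or.mp h23
      have hB1 := lemB a (M 3 0) (M 3 1) (M 3 2) (M 3 3) x1 hc23 hmax1 hx1A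
      have hB2 := lemB a (M 3 0) (M 3 1) (M 3 2) (M 3 3) x2 hc23 hmax2 hx2A
      have hB3 := lemB a (M 3 0) (M 3 1) (M 3 2) (M 3 3) x3 hc23 hmax3 hx3A
      have hB4 := lemB a (M 3 0) (M 3 1) (M 3 2) (M 3 3) x4 hc23 hmax4 hx4A
      have hδ2 : 0 < (M 3 2)^2 + (M 3 3)^2 := pos_of_ne' hc23
      have hδne : ((M 3 2)^2 + (M 3 3)^2) ≠ 0 := ne_of_gt hδ2
      have key2_2 : ((M 3 2)^2 + (M 3 3)^2) * (x2 2 - x1 2) = 0 := by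
        linear_combination (M 3 3) * hB2 - (M 3 3) * hB1 + (M 3 2) * L2 - (M 3 2) * L1
          - (M 3 2) * (x2 0 - x1 0) * h01.1 - (M 3 2) * (x2 1 - x1 1) * h01.2
      have key2_3 : ((M 3 2)^2 + (M 3 3)^2) * (x3 2 - x1 2) = 0 := by
        linear_combination (M 3 3) * hB3 - (M 3 3) * hB1 + (M 3 2) * L3 - (M 3 2) * L1
          - (M 3 2) * (x3 0 - x1 0) * h01.1 - (M 3 2) * (x3 1 - x1 1) * h01.2
      have key2_4 : ((M 3 2)^2 + (M 3 3)^2) * (x4 2 - x1 2) = 0 := by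
        linear_combination (M 3 3) * hB4 - (M 3 3) * hB1 + (M 3 2) * L4 - (M 3 2) * L1
          - (M 3 2) * (x4 0 - x1 0) * h01.1 - (M 3 2) * (x4 1 - x1 1) * h01.2
      have key3_2 : ((M 3 2)^2 + (M 3 3)^2) * (x2 3 - x1 3) = 0 := by
        linear_combination (-(M 3 2)) * hB2 + (M 3 2) * hB1 + (M 3 3) * L2 - (M 3 3) * L1
          - (M 3 3) * (x2 0 - x1 0) * h01.1 - (M 3 3) * (x2 1 - x1 1) * h01.2
      have key3_3 : ((M 3 2)^2 + (M 3 3)^2) * (x3 3 - x1 3) = 0 := by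
        linear_combination (-(M 3 2)) * hB3 + (M 3 2) * hB1 + (M 3 3) * L3 - (M 3 3) * L1
          - (M 3 3) * (x3 0 - x1 0) * h01.1 - (M 3 3) * (x3 1 - x1 1) * h01.2
      have key3_4 : ((M 3 2)^2 + (M 3 3)^2) * (x4 3 - x1 3) = 0 := by
        linear_combination (-(M 3 2)) * hB4 + (M 3 2) * hB1 + (M 3 3) * L4 - (M 3 3) * L1
          - (M 3 3) * (x4 0 - x1 0) * h01.1 - (M 3 3) * (x4 1 - x1 1) * h01.2
      have hd2_2 : x2 2 - x1 2 = 0 := by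
        rcases mul_eq_zero.mp key2_2 with h | h
        exacts [absurd h hδne, h]
      have hd2_3 : x3 2 - x1 2 = 0 := by
        rcases mul_eq_zero.mp key2_3 with h | h
        exacts [absurd h hδne, h]
      have hd2_4 : x4 2 - x1 2 = 0 := by
        rcases mul_eq_zero.mp key2_4 with h | h
        exacts [absurd h hδne, h]
      have hd3_2 : x2 3 - x1 3 = 0 := by
        rcases mul_eq_zero.mp key3_2 with h | h
        exacts [absurd h hδne, h]
      have hd3_3 : x3 3 - x1 3 = 0 := by
        rcases mul_eq_zero.mp key3_3 with h | h
        exacts [absurd h hδne, h]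
      have hd3_4 : x4 3 - x1 3 = 0 := by
        rcases mul_eq_zero.mp key3_4 with h | h
        exacts [absurd h hδne, h]
      have H20 : (x2 0 - x1 0) * M 0 0 + (x2 1 - x1 1) * M 0 1 = -(2*b) := by
        linear_combination D20 - M 0 2 * hd2_2 - M 0 3 * hd3_2
      have H21 : (x2 0 - x1 0) * M 1 0 + (x2 1 - x1 1) * M 1 1 = 0 := by
        linear_combination D21 - M 1 2 * hd2_2 - M 1 3 * hd3_2
      have H22 : (x2 0 - x1 0) * M 2 0 + (x2 1 - x1 1) * M 2 1 = 0 := by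
        linear_combination D22 - M 2 2 * hd2_2 - M 2 3 * hd3_2
      have H30 : (x3 0 - x1 0) * M 0 0 + (x3 1 - x1 1) * M 0 1 = -b := by
        linear_combination D30 - M 0 2 * hd2_3 - M 0 3 * hd3_3
      have H31 : (x3 0 - x1 0) * M 1 0 + (x3 1 - x1 1) * M 1 1 = b := by
        linear_combination D31 - M 1 2 * hd2_3 - M 1 3 * hd3_3
      have H32 : (x3 0 - x1 0) * M 2 0 + (x3 1 - x1 1) * M 2 1 = 0 := by
        linear_combination D32 - M 2 2 * hd2_3 - M 2 3 * hd3_3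
      have H40 : (x4 0 - x1 0) * M 0 0 + (x4 1 - x1 1) * M 0 1 = -b := by
        linear_combination D40 - M 0 2 * hd2_4 - M 0 3 * hd3_4
      have H41 : (x4 0 - x1 0) * M 1 0 + (x4 1 - x1 1) * M 1 1 = 0 := by
        linear_combination D41 - M 1 2 * hd2_4 - M 1 3 * hd3_4
      have H42 : (x4 0 - x1 0) * M 2 0 + (x4 1 - x1 1) * M 2 1 = b := by
        linear_combination D42 - M 2 2 * hd2_4 - M 2 3 * hd3_4
      exact finalcontra b hb _ _ _ _ _ _ _ _ _ _ _ _ H20 H21 H22 H30 H31 H32 H40 H41 H42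
  · have hc01 : M 3 0 ≠ 0 ∨ M 3 1 ≠ 0 := not_and_or.mp h01
    by_cases h23 : M 3 2 = 0 ∧ M 3 3 = 0
    · -- (c0,c1) ≠ 0, c2 = c3 = 0
      have hC1 := lemC a (M 3 0) (M 3 1) (M 3 2) (M 3 3) ha x1 hc01 h23.1 h23.2 hmax1 hx1A
      have hC2 := lemC a (M 3 0) (M 3 1) (M 3 2) (M 3 3) ha x2 hc01 h23.1 h23.2 hmax2 hx2A
      have hC3 := lemC a (M 3 0) (M 3 1) (M 3 2) (M 3 3) ha x3 hc01 h23.1 h23.2 hmax3 hx3A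
      have hC4 := lemC a (M 3 0) (M 3 1) (M 3 2) (M 3 3) ha x4 hc01 h23.1 h23.2 hmax4 hx4A
      have hd2_2 : x2 2 - x1 2 = 0 := by rw [hC2.1, hC1.1]; ring
      have hd2_3 : x3 2 - x1 2 = 0 := by rw [hC3.1, hC1.1]; ring
      have hd2_4 : x4 2 - x1 2 = 0 := by rw [hC4.1, hC1.1]; ring
      have hd3_2 : x2 3 - x1 3 = 0 := by rw [hC2.2, hC1.2]; ring
      have hd3_3 : x3 3 - x1 3 = 0 := by rw [hC3.2, hC1.2]; ring
      have hd3_4 : x4 3 - x1 3 = 0 := by rw [hC4.2, hC1.2]; ring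
      have H20 : (x2 0 - x1 0) * M 0 0 + (x2 1 - x1 1) * M 0 1 = -(2*b) := by
        linear_combination D20 - M 0 2 * hd2_2 - M 0 3 * hd3_2
      have H21 : (x2 0 - x1 0) * M 1 0 + (x2 1 - x1 1) * M 1 1 = 0 := by
        linear_combination D21 - M 1 2 * hd2_2 - M 1 3 * hd3_2
      have H22 : (x2 0 - x1 0) * M 2 0 + (x2 1 - x1 1) * M 2 1 = 0 := by
        linear_combination D22 - M 2 2 * hd2_2 - M 2 3 * hd3_2
      have H30 : (x3 0 - x1 0) * M 0 0 + (x3 1 - x1 1) * M 0 1 = -b := by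
        linear_combination D30 - M 0 2 * hd2_3 - M 0 3 * hd3_3
      have H31 : (x3 0 - x1 0) * M 1 0 + (x3 1 - x1 1) * M 1 1 = b := by
        linear_combination D31 - M 1 2 * hd2_3 - M 1 3 * hd3_3
      have H32 : (x3 0 - x1 0) * M 2 0 + (x3 1 - x1 1) * M 2 1 = 0 := by
        linear_combination D32 - M 2 2 * hd2_3 - M 2 3 * hd3_3
      have H40 : (x4 0 - x1 0) * M 0 0 + (x4 1 - x1 1) * M 0 1 = -b := by
        linear_combination D40 - M 0 2 * hd2_4 - M 0 3 * hd3_4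
      have H41 : (x4 0 - x1 0) * M 1 0 + (x4 1 - x1 1) * M 1 1 = 0 := by
        linear_combination D41 - M 1 2 * hd2_4 - M 1 3 * hd3_4
      have H42 : (x4 0 - x1 0) * M 2 0 + (x4 1 - x1 1) * M 2 1 = b := by
        linear_combination D42 - M 2 2 * hd2_4 - M 2 3 * hd3_4
      exact finalcontra b hb _ _ _ _ _ _ _ _ _ _ _ _ H20 H21 H22 H30 H31 H32 H40 H41 H42
    · -- both (c0,c1) ≠ 0 and (c2,c3) ≠ 0
      have hc23 : M 3 2 ≠ 0 ∨ M 3 3 ≠ 0 := not_and_or.mp h23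
      have hA1 := lemA a (M 3 0) (M 3 1) (M 3 2) (M 3 3) x1 hc01 hmax1 hx1A
      have hA2 := lemA a (M 3 0) (M 3 1) (M 3 2) (M 3 3) x2 hc01 hmax2 hx2A
      have hA3 := lemA a (M 3 0) (M 3 1) (M 3 2) (M 3 3) x3 hc01 hmax3 hx3A
      have hA4 := lemA a (M 3 0) (M 3 1) (M 3 2) (M 3 3) x4 hc01 hmax4 hx4A
      have hB1 := lemB a (M 3 0) (M 3 1) (M 3 2) (M 3 3) x1 hc23 hmax1 hx1A
      have hB2 := lemB a (M 3 0) (M 3 1) (M 3 2) (M 3 3) x2 hc23 hmax2 hx2A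
      have hB3 := lemB a (M 3 0) (M 3 1) (M 3 2) (M 3 3) x3 hc23 hmax3 hx3A
      have hB4 := lemB a (M 3 0) (M 3 1) (M 3 2) (M 3 3) x4 hc23 hmax4 hx4A
      have hγne : ((M 3 0)^2 + (M 3 1)^2) ≠ 0 := ne_of_gt (pos_of_ne' hc01)
      have hδne : ((M 3 2)^2 + (M 3 3)^2) ≠ 0 := ne_of_gt (pos_of_ne' hc23)
      have hAd2 : M 3 1 * (x2 0 - x1 0) = M 3 0 * (x2 1 - x1 1) := by
        linear_combination hA2 - hA1
      have hAd3 : M 3 1 * (x3 0 - x1 0) = M 3 0 * (x3 1 - x1 1) := by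
        linear_combination hA3 - hA1
      have hAd4 : M 3 1 * (x4 0 - x1 0) = M 3 0 * (x4 1 - x1 1) := by
        linear_combination hA4 - hA1
      have hBd2 : M 3 3 * (x2 2 - x1 2) = M 3 2 * (x2 3 - x1 3) := by
        linear_combination hB2 - hB1
      have hBd3 : M 3 3 * (x3 2 - x1 2) = M 3 2 * (x3 3 - x1 3) := by
        linear_combination hB3 - hB1
      have hBd4 : M 3 3 * (x4 2 - x1 2) = M 3 2 * (x4 3 - x1 3) := by
        linear_combination hB4 - hB1
      set t2 := (M 3 0 * (x2 0 - x1 0) + M 3 1 * (x2 1 - x1 1)) / ((M 3 0)^2 + (M 3 1)^2) with ht2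
      set t3 := (M 3 0 * (x3 0 - x1 0) + M 3 1 * (x3 1 - x1 1)) / ((M 3 0)^2 + (M 3 1)^2) with ht3
      set t4 := (M 3 0 * (x4 0 - x1 0) + M 3 1 * (x4 1 - x1 1)) / ((M 3 0)^2 + (M 3 1)^2) with ht4
      set u2 := (M 3 2 * (x2 2 - x1 2) + M 3 3 * (x2 3 - x1 3)) / ((M 3 2)^2 + (M 3 3)^2) with hu2
      set u3 := (M 3 2 * (x3 2 - x1 2) + M 3 3 * (x3 3 - x1 3)) / ((M 3 2)^2 + (M 3 3)^2) with hu3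
      set u4 := (M 3 2 * (x4 2 - x1 2) + M 3 3 * (x4 3 - x1 3)) / ((M 3 2)^2 + (M 3 3)^2) with hu4
      have htc0_2 : t2 * M 3 0 = x2 0 - x1 0 := by
        rw [ht2]; field_simp; linear_combination (-(M 3 1)) * hAd2
      have htc1_2 : t2 * M 3 1 = x2 1 - x1 1 := by
        rw [ht2]; field_simp; linear_combination (M 3 0) * hAd2
      have htc0_3 : t3 * M 3 0 = x3 0 - x1 0 := by
        rw [ht3]; field_simp; linear_combination (-(M 3 1)) * hAd3
      have htc1_3 : t3 * M 3 1 = x3 1 - x1 1 := by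
        rw [ht3]; field_simp; linear_combination (M 3 0) * hAd3
      have htc0_4 : t4 * M 3 0 = x4 0 - x1 0 := by
        rw [ht4]; field_simp; linear_combination (-(M 3 1)) * hAd4
      have htc1_4 : t4 * M 3 1 = x4 1 - x1 1 := by
        rw [ht4]; field_simp; linear_combination (M 3 0) * hAd4
      have huc2_2 : u2 * M 3 2 = x2 2 - x1 2 := by
        rw [hu2]; field_simp; linear_combination (-(M 3 3)) * hBd2
      have huc3_2 : u2 * M 3 3 = x2 3 - x1 3 := by
        rw [hu2]; field_simp; linear_combination (M 3 2) * hBd2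
      have huc2_3 : u3 * M 3 2 = x3 2 - x1 2 := by
        rw [hu3]; field_simp; linear_combination (-(M 3 3)) * hBd3
      have huc3_3 : u3 * M 3 3 = x3 3 - x1 3 := by
        rw [hu3]; field_simp; linear_combination (M 3 2) * hBd3
      have huc2_4 : u4 * M 3 2 = x4 2 - x1 2 := by
        rw [hu4]; field_simp; linear_combination (-(M 3 3)) * hBd4
      have huc3_4 : u4 * M 3 3 = x4 3 - x1 3 := by
        rw [hu4]; field_simp; linear_combination (M 3 2) * hBd4
      have H20 : t2 * (M 0 0 * M 3 0 + M 0 1 * M 3 1) + u2 * (M 0 2 * M 3 2 + M 0 3 * M 3 3)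
          = -(2*b) := by
        linear_combination D20 + M 0 0 * htc0_2 + M 0 1 * htc1_2 + M 0 2 * huc2_2 + M 0 3 * huc3_2
      have H21 : t2 * (M 1 0 * M 3 0 + M 1 1 * M 3 1) + u2 * (M 1 2 * M 3 2 + M 1 3 * M 3 3)
          = 0 := by
        linear_combination D21 + M 1 0 * htc0_2 + M 1 1 * htc1_2 + M 1 2 * huc2_2 + M 1 3 * huc3_2
      have H22 : t2 * (M 2 0 * M 3 0 + M 2 1 * M 3 1) + u2 * (M 2 2 * M 3 2 + M 2 3 * M 3 3)
          = 0 := by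
        linear_combination D22 + M 2 0 * htc0_2 + M 2 1 * htc1_2 + M 2 2 * huc2_2 + M 2 3 * huc3_2
      have H30 : t3 * (M 0 0 * M 3 0 + M 0 1 * M 3 1) + u3 * (M 0 2 * M 3 2 + M 0 3 * M 3 3)
          = -b := by
        linear_combination D30 + M 0 0 * htc0_3 + M 0 1 * htc1_3 + M 0 2 * huc2_3 + M 0 3 * huc3_3
      have H31 : t3 * (M 1 0 * M 3 0 + M 1 1 * M 3 1) + u3 * (M 1 2 * M 3 2 + M 1 3 * M 3 3)
          = b := by
        linear_combination D31 + M 1 0 * htc0_3 + M 1 1 * htc1_3 + M 1 2 * huc2_3 + M 1 3 * huc3_3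
      have H32 : t3 * (M 2 0 * M 3 0 + M 2 1 * M 3 1) + u3 * (M 2 2 * M 3 2 + M 2 3 * M 3 3)
          = 0 := by
        linear_combination D32 + M 2 0 * htc0_3 + M 2 1 * htc1_3 + M 2 2 * huc2_3 + M 2 3 * huc3_3
      have H40 : t4 * (M 0 0 * M 3 0 + M 0 1 * M 3 1) + u4 * (M 0 2 * M 3 2 + M 0 3 * M 3 3)
          = -b := by
        linear_combination D40 + M 0 0 * htc0_4 + M 0 1 * htc1_4 + M 0 2 * huc2_4 + M 0 3 * huc3_4
      have H41 : t4 * (M 1 0 * M 3 0 + M 1 1 * M 3 1) + u4 * (M 1 2 * M 3 2 + M 1 3 * M 3 3)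
          = 0 := by
        linear_combination D41 + M 1 0 * htc0_4 + M 1 1 * htc1_4 + M 1 2 * huc2_4 + M 1 3 * huc3_4
      have H42 : t4 * (M 2 0 * M 3 0 + M 2 1 * M 3 1) + u4 * (M 2 2 * M 3 2 + M 2 3 * M 3 3)
          = b := by
        linear_combination D42 + M 2 0 * htc0_4 + M 2 1 * htc1_4 + M 2 2 * huc2_4 + M 2 3 * huc3_4
      exact finalcontra b hb _ _ _ _ _ _ _ _ _ _ _ _ H20 H21 H22 H30 H31 H32 H40 H41 H42
end
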